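/- The image τ(Ω^L_∞) of the set Ω^L_∞ under the Takagi function has Lebesgue measure zero. -/

import Mathlib

open MeasureTheory Set

/-- Distance from a real number to the nearest integer. -/
noncomputable def distNearestInt (t : ℝ) : ℝ := |t - round t|

/-- The Takagi function. -/
noncomputable def takagi (x : ℝ) : ℝ := ∑' n : ℕ, distNearestInt (2 ^ n * x) / 2 ^ n

/-- The `j`-th binary digit of `x ∈ [0,1)` (binary expansion terminating in `0^∞`). -/
noncomputable def bdigit (x : ℝ) (j : ℕ) : ℤ := ⌊(2 : ℝ) ^ j * x⌋ - 2 * ⌊(2 : ℝ) ^ (j - 1) * x⌋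

/-- The deficient digit function `D_j(x) = j - 2(b_1(x) + ⋯ + b_j(x))`. -/
noncomputable def defDigit (x : ℝ) (j : ℕ) : ℤ := (j : ℤ) - 2 * ∑ i ∈ Finset.Icc 1 j, bdigit x i

/-- The deficient digit set `Ω^L`. -/
noncomputable def OmegaL : Set ℝ := {x | x ∈ Set.Ico (0 : ℝ) 1 ∧ ∀ j : ℕ, 1 ≤ j → 0 ≤ defDigit x j}

/-- The set `½Ω^L = {x ∈ [0,1) : D_j(x) > 0 for all j ≥ 1}`. -/
noncomputable def halfOmegaL : Set ℝ :=
  {x | x ∈ Set.Ico (0 : ℝ) 1 ∧ ∀ j : ℕ, 1 ≤ j → 0 < defDigit x j}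

/-- The Takagi singular function. -/
noncomputable def takagiS (x : ℝ) : ℝ := sSup {y | ∃ t ∈ OmegaL, t ≤ x ∧ y = takagi t + t}

/-- `Ω^L_∞`: points of `Ω^L` with infinitely many balance points. -/
noncomputable def OmegaLinf : Set ℝ :=
  {x ∈ OmegaL | {j : ℕ | 1 ≤ j ∧ defDigit x j = 0}.Infinite}

/-- `Ω^L_fin = Ω^L \ Ω^L_∞`. -/
noncomputable def OmegaLfin : Set ℝ := OmegaL \ OmegaLinf

/-- `(m, k)` encodes a member `k / 2^(2m)` of the breakpoint set `ℬ'`. -/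
noncomputable def breakpoint (m k : ℕ) : Prop :=
  (m = 0 ∧ k = 0) ∨
    (1 ≤ m ∧ 0 < k ∧ k < 2 ^ (2 * m) ∧
      (∀ j : ℕ, 1 ≤ j → j ≤ 2 * m - 1 → 0 ≤ defDigit ((k : ℝ) / 2 ^ (2 * m)) j) ∧
      defDigit ((k : ℝ) / 2 ^ (2 * m)) (2 * m) = 0)

/-- The fine partition set `Ω^L(B)` for `B = k / 2^(2m)`. -/
noncomputable def fineSet (m k : ℕ) : Set ℝ :=
  {x | ∃ x' ∈ halfOmegaL, x = (k : ℝ) / 2 ^ (2 * m) + x' / 2 ^ (2 * m)}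

/-- The set `Γ_{2r}`. -/
noncomputable def Gamma (r : ℕ) : Set ℝ :=
  {x | x ∈ Set.Ico (0 : ℝ) 1 ∧ ∀ j : ℕ, 1 ≤ j →
    ((¬ (2 * r ∣ j) → 0 < defDigit x j) ∧ ((2 * r) ∣ j → defDigit x j = 0))}

/-- The level set `L(y)` of the Takagi function. -/
noncomputable def levelSet (y : ℝ) : Set ℝ := {x ∈ Set.Icc (0 : ℝ) 1 | takagi x = y}
lemma dNI_nonneg (t : ℝ) : 0 ≤ distNearestInt t := abs_nonneg _

lemma dNI_le_half (t : ℝ) : distNearestInt t ≤ 1/2 := abs_sub_round t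

lemma dNI_add_int (t : ℝ) (n : ℤ) : distNearestInt (t + n) = distNearestInt t := by
  unfold distNearestInt
  rw [round_add_intCast]
  push_cast
  ring_nf

lemma dNI_int (n : ℤ) : distNearestInt (n : ℝ) = 0 := by
  have := dNI_add_int 0 n
  simpa [distNearestInt] using this

lemma dNI_of_fract_lt (t : ℝ) (h : Int.fract t < 1/2) : distNearestInt t = Int.fract t := by
  have hf := Int.fract_nonneg t
  have hfr : Int.fract t = t - ⌊t⌋ := Int.self_sub_floor t ▸ rfl
  have hr : round t = ⌊t⌋ := by
    rw [round_eq]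
    apply Int.floor_eq_iff.mpr
    constructor
    · push_cast; linarith [Int.floor_le t]
    · push_cast; linarith
  rw [distNearestInt, hr, abs_of_nonneg] <;> rw [Int.fract] at * <;> linarith

lemma dNI_of_half_le (t : ℝ) (h : 1/2 ≤ Int.fract t) : distNearestInt t = 1 - Int.fract t := by
  have hf := Int.fract_lt_one t
  have hr : round t = ⌊t⌋ + 1 := by
    rw [round_eq]
    apply Int.floor_eq_iff.mpr
    rw [Int.fract] at *
    constructor
    · push_cast; linarith
    · push_cast; linarith
  rw [distNearestInt, hr, Int.fract] at *
  push_cast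
  rw [abs_of_nonpos (by linarith)]
  ring

lemma takagi_term_le (x : ℝ) (n : ℕ) :
    distNearestInt (2 ^ n * x) / 2 ^ n ≤ (1/2) * (1/2:ℝ)^n := by
  have h2 : (0:ℝ) < (2:ℝ)^n := by positivity
  rw [one_div_pow, mul_one_div]
  exact (div_le_div_iff_of_pos_right h2).mpr (dNI_le_half _)

lemma takagi_summable (x : ℝ) : Summable (fun n : ℕ => distNearestInt (2 ^ n * x) / 2 ^ n) :=
  Summable.of_nonneg_of_le (fun n => div_nonneg (dNI_nonneg _) (by positivity)) (takagi_term_le x)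
    ((summable_geometric_two).mul_left _)

lemma takagi_nonneg (x : ℝ) : 0 ≤ takagi x :=
  tsum_nonneg fun n => div_nonneg (dNI_nonneg _) (by positivity)

lemma takagi_le_one (x : ℝ) : takagi x ≤ 1 := by
  have h : takagi x ≤ ∑' n : ℕ, (1/2) * (1/2:ℝ)^n :=
    Summable.tsum_le_tsum (takagi_term_le x) (takagi_summable x) ((summable_geometric_two).mul_left _)
  rw [tsum_mul_left, tsum_geometric_two] at h
  linarith


/-- Integer floor of a real divided by a positive natural. -/
lemma int_floor_div_nat (a : ℝ) (n : ℕ) (hn : 0 < n) : ⌊a / n⌋ = ⌊a⌋ / n := by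
  have hn' : (0:ℝ) < (n:ℝ) := by exact_mod_cast hn
  have hmod := Int.emod_emod_of_dvd
  apply Int.floor_eq_iff.mpr
  have h1 : (⌊a⌋ / n) * n ≤ ⌊a⌋ := Int.ediv_mul_le ⌊a⌋ (by exact_mod_cast hn.ne')
  have h2 : ⌊a⌋ < (⌊a⌋ / n + 1) * n := Int.lt_ediv_add_one_mul_self ⌊a⌋ (by exact_mod_cast hn)
  constructor
  · rw [le_div_iff₀ hn']
    calc ((⌊a⌋ / n : ℤ) : ℝ) * n = ((⌊a⌋ / n * n : ℤ) : ℝ) := by push_cast; ring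
    _ ≤ (⌊a⌋ : ℝ) := by exact_mod_cast h1
    _ ≤ a := Int.floor_le a
  · rw [div_lt_iff₀ hn']
    calc a < (⌊a⌋ : ℝ) + 1 := Int.lt_floor_add_one a
    _ ≤ ((⌊a⌋ / n + 1) * n : ℤ) := by exact_mod_cast h2
    _ = ((⌊a⌋ / n : ℤ) + 1) * (n : ℝ) := by push_cast; ring

lemma floor_two_pow_trunc (x : ℝ) (N j : ℕ) (hj : j ≤ N) :
    ⌊(2:ℝ)^j * ((⌊(2:ℝ)^N * x⌋ : ℝ) / 2^N)⌋ = ⌊(2:ℝ)^j * x⌋ := by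
  have key : (2:ℝ)^N = 2^j * 2^(N-j) := by rw [← pow_add]; congr 1; omega
  have h1 : (2:ℝ)^j * ((⌊(2:ℝ)^N * x⌋ : ℝ) / 2^N) = (⌊(2:ℝ)^N * x⌋ : ℝ) / ((2^(N-j) : ℕ) : ℝ) := by
    rw [key]; push_cast; field_simp
  have h2 : (2:ℝ)^j * x = ((2:ℝ)^N * x) / ((2^(N-j) : ℕ) : ℝ) := by
    rw [key]; push_cast; field_simp
  rw [h1, h2, int_floor_div_nat _ _ (by positivity), int_floor_div_nat _ _ (by positivity),
    Int.floor_intCast]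

lemma bdigit_trunc (x : ℝ) (N j : ℕ) (hj : j ≤ N) :
    bdigit ((⌊(2:ℝ)^N * x⌋ : ℝ) / 2^N) j = bdigit x j := by
  unfold bdigit
  rw [floor_two_pow_trunc x N j hj, floor_two_pow_trunc x N (j-1) (by omega)]

lemma defDigit_trunc (x : ℝ) (N j : ℕ) (hj : j ≤ N) :
    defDigit ((⌊(2:ℝ)^N * x⌋ : ℝ) / 2^N) j = defDigit x j := by
  unfold defDigit
  congr 1
  congr 1
  apply Finset.sum_congr rfl
  intro i hi
  simp only [Finset.mem_Icc] at hi
  exact bdigit_trunc x N i (by omega)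


lemma step_eq (x : ℝ) (N n : ℕ) (hn : n < N) :
    distNearestInt ((2:ℝ)^n * x) - distNearestInt ((2:ℝ)^n * ((⌊(2:ℝ)^N * x⌋ : ℝ) / 2^N))
      = (1 - 2 * (bdigit x (n+1) : ℝ)) * ((2:ℝ)^n * (x - (⌊(2:ℝ)^N * x⌋ : ℝ) / 2^N)) := by
  set B : ℝ := (⌊(2:ℝ)^N * x⌋ : ℝ) / 2^N with hB
  have hfl : ⌊(2:ℝ)^n * B⌋ = ⌊(2:ℝ)^n * x⌋ := floor_two_pow_trunc x N n hn.le
  have hfl2 : ⌊(2:ℝ)^(n+1) * B⌋ = ⌊(2:ℝ)^(n+1) * x⌋ := floor_two_pow_trunc x N (n+1) hn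
  set F : ℝ := Int.fract ((2:ℝ)^n * x) with hF
  set G : ℝ := Int.fract ((2:ℝ)^n * B) with hG
  have hFG : F - G = (2:ℝ)^n * (x - B) := by
    rw [hF, hG, Int.fract, Int.fract, hfl]; ring
  have hb : bdigit x (n+1) = ⌊2*F⌋ := by
    have h2F : 2*F = (2:ℝ)^(n+1) * x - ((2 * ⌊(2:ℝ)^n * x⌋ : ℤ) : ℝ) := by
      rw [hF, Int.fract]; push_cast [pow_succ]; ring
    rw [h2F, Int.floor_sub_intCast]
    unfold bdigit
    simp only [Nat.add_sub_cancel]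
  have hb' : bdigit x (n+1) = ⌊2*G⌋ := by
    have h2G : 2*G = (2:ℝ)^(n+1) * B - ((2 * ⌊(2:ℝ)^n * B⌋ : ℤ) : ℝ) := by
      rw [hG, Int.fract]; push_cast [pow_succ]; ring
    rw [h2G, Int.floor_sub_intCast, hfl, hfl2]
    unfold bdigit
    simp only [Nat.add_sub_cancel]
  have hF0 := Int.fract_nonneg ((2:ℝ)^n * x)
  have hF1 := Int.fract_lt_one ((2:ℝ)^n * x)
  have hG0 := Int.fract_nonneg ((2:ℝ)^n * B)
  have hG1 := Int.fract_lt_one ((2:ℝ)^n * B)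
  rw [← hF] at hF0 hF1; rw [← hG] at hG0 hG1
  have hbcases : bdigit x (n+1) = 0 ∨ bdigit x (n+1) = 1 := by
    have h0 : (0:ℤ) ≤ ⌊2*F⌋ := Int.floor_nonneg.mpr (by linarith)
    have h1 : ⌊2*F⌋ < 2 := by
      have : (2:ℝ)*F < 2 := by linarith
      exact_mod_cast Int.floor_lt.mpr (by exact_mod_cast this)
    rw [hb]; omega
  rcases hbcases with h | h
  · have hFlt : F < 1/2 := by
      have : ⌊2*F⌋ = 0 := by rw [← hb]; exact h
      have := (Int.floor_eq_zero_iff.mp this).2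
      linarith
    have hGlt : G < 1/2 := by
      have : ⌊2*G⌋ = 0 := by rw [← hb']; exact h
      have := (Int.floor_eq_zero_iff.mp this).2
      linarith
    rw [dNI_of_fract_lt _ (by rw [← hF] at *; exact hFlt), dNI_of_fract_lt _ (by rw [← hG] at *; exact hGlt)]
    rw [← hF, ← hG, h]
    push_cast
    linarith [hFG]
  · have hFge : 1/2 ≤ F := by
      have h2 : ⌊2*F⌋ = 1 := by rw [← hb]; exact h
      have h3 : ((1:ℤ):ℝ) ≤ 2*F := by
        rw [← h2]; exact Int.floor_le _
      push_cast at h3; linarith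
    have hGge : 1/2 ≤ G := by
      have h2 : ⌊2*G⌋ = 1 := by rw [← hb']; exact h
      have h3 : ((1:ℤ):ℝ) ≤ 2*G := by
        rw [← h2]; exact Int.floor_le _
      push_cast at h3; linarith
    rw [dNI_of_half_le _ (by rw [← hF] at *; exact hFge), dNI_of_half_le _ (by rw [← hG] at *; exact hGge)]
    rw [← hF, ← hG, h]
    push_cast
    linarith [hFG]

lemma takagi_head (x : ℝ) (N : ℕ) :
    takagi x = (∑ n ∈ Finset.range N, distNearestInt ((2:ℝ)^n * x)/2^n)
      + takagi (Int.fract ((2:ℝ)^N * x)) / 2^N := by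
  have hsplit := Summable.sum_add_tsum_nat_add (f := fun n : ℕ => distNearestInt ((2:ℝ)^n * x)/2^n) N
    (takagi_summable x)
  have htail : ∀ n : ℕ, distNearestInt ((2:ℝ)^(n+N) * x)/2^(n+N)
      = (distNearestInt ((2:ℝ)^n * Int.fract ((2:ℝ)^N * x))/2^n) * (1/2^N) := by
    intro n
    have he : (2:ℝ)^(n+N) * x = 2^n * Int.fract ((2:ℝ)^N * x) + ((2^n * ⌊(2:ℝ)^N * x⌋ : ℤ) : ℝ) := by
      rw [Int.fract]; push_cast [pow_add]; ring
    rw [he, dNI_add_int, pow_add]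
    field_simp
  unfold takagi
  rw [← hsplit]
  congr 1
  rw [tsum_congr htail, tsum_mul_right, mul_one_div]

lemma takagi_trunc_finsum (x : ℝ) (N : ℕ) :
    takagi ((⌊(2:ℝ)^N * x⌋ : ℝ) / 2^N)
      = ∑ n ∈ Finset.range N, distNearestInt ((2:ℝ)^n * ((⌊(2:ℝ)^N * x⌋ : ℝ) / 2^N))/2^n := by
  set B : ℝ := (⌊(2:ℝ)^N * x⌋ : ℝ) / 2^N with hB
  have hsplit := Summable.sum_add_tsum_nat_add (f := fun n : ℕ => distNearestInt ((2:ℝ)^n * B)/2^n) N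
    (takagi_summable B)
  have htail : ∀ n : ℕ, distNearestInt ((2:ℝ)^(n+N) * B)/2^(n+N) = 0 := by
    intro n
    have he : (2:ℝ)^(n+N) * B = ((2^n * ⌊(2:ℝ)^N * x⌋ : ℤ) : ℝ) := by
      rw [hB]
      push_cast [pow_add]
      field_simp
    rw [he, dNI_int, zero_div]
  unfold takagi
  rw [← hsplit, tsum_congr htail, tsum_zero, add_zero]

lemma defDigit_range (x : ℝ) (N : ℕ) :
    ((defDigit x N : ℤ) : ℝ) = ∑ n ∈ Finset.range N, (1 - 2 * (bdigit x (n+1) : ℝ)) := by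
  unfold defDigit
  have h1 : ∑ i ∈ Finset.Icc 1 N, bdigit x i = ∑ n ∈ Finset.range N, bdigit x (n+1) := by
    rw [← Finset.Ico_add_one_right_eq_Icc, Finset.sum_Ico_eq_sum_range]
    simp [add_comm]
  rw [h1]
  push_cast
  rw [Finset.sum_sub_distrib]
  simp [Finset.mul_sum]

lemma takagi_decomp (x : ℝ) (N : ℕ) :
    takagi x = takagi ((⌊(2:ℝ)^N * x⌋ : ℝ)/2^N)
      + (x - (⌊(2:ℝ)^N * x⌋ : ℝ)/2^N) * ((defDigit x N : ℤ) : ℝ)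
      + takagi (Int.fract ((2:ℝ)^N * x)) / 2^N := by
  rw [takagi_head x N, takagi_trunc_finsum x N, defDigit_range]
  have hsum : ∑ n ∈ Finset.range N, distNearestInt ((2:ℝ)^n * x)/2^n
      = (∑ n ∈ Finset.range N, distNearestInt ((2:ℝ)^n * ((⌊(2:ℝ)^N * x⌋ : ℝ) / 2^N))/2^n)
        + ∑ n ∈ Finset.range N, (x - (⌊(2:ℝ)^N * x⌋ : ℝ)/2^N) * (1 - 2 * (bdigit x (n+1) : ℝ)) := by
    rw [← Finset.sum_add_distrib]
    apply Finset.sum_congr rfl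
    intro n hn
    simp only [Finset.mem_range] at hn
    have h := step_eq x N n hn
    have h2 : ((2:ℝ)^n) ≠ 0 := by positivity
    rw [show distNearestInt ((2:ℝ)^n * x)
        = distNearestInt ((2:ℝ)^n * ((⌊(2:ℝ)^N * x⌋ : ℝ) / 2^N))
          + (1 - 2 * (bdigit x (n+1) : ℝ)) * ((2:ℝ)^n * (x - (⌊(2:ℝ)^N * x⌋ : ℝ) / 2^N)) by
      linarith]
    field_simp
  rw [hsum, Finset.mul_sum]


/-- number of one digits among the first `j` binary digits of `k/2^n`. -/
def ones (n k j : ℕ) : ℕ := ∑ i ∈ Finset.Icc 1 j, (k / 2^(n-i)) % 2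

lemma floor_nat_pow (K n i : ℕ) (hi : i ≤ n) :
    ⌊(2:ℝ)^i * ((K:ℝ) / 2^n)⌋ = ((K / 2^(n-i) : ℕ) : ℤ) := by
  have key : (2:ℝ)^n = 2^i * 2^(n-i) := by rw [← pow_add]; congr 1; omega
  have h1 : (2:ℝ)^i * ((K:ℝ) / 2^n) = (K:ℝ) / ((2^(n-i) : ℕ) : ℝ) := by
    rw [key]; push_cast; field_simp
  rw [h1, int_floor_div_nat _ _ (by positivity), Int.floor_natCast]
  push_cast
  rfl

lemma bdigit_nat (K n j : ℕ) (hj1 : 1 ≤ j) (hj : j ≤ n) :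
    bdigit ((K:ℝ)/2^n) j = (((K / 2^(n-j)) % 2 : ℕ) : ℤ) := by
  unfold bdigit
  rw [floor_nat_pow K n j hj, floor_nat_pow K n (j-1) (by omega)]
  have h : n - (j-1) = (n-j) + 1 := by omega
  rw [h, pow_succ]
  have h2 : K / (2^(n-j) * 2) = (K / 2^(n-j)) / 2 := by rw [Nat.div_div_eq_div_mul]
  rw [h2]
  omega

lemma defDigit_nat (K n j : ℕ) (hj : j ≤ n) :
    defDigit ((K:ℝ)/2^n) j = (j : ℤ) - 2 * (ones n K j : ℤ) := by
  unfold defDigit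
  have h : ∑ i ∈ Finset.Icc 1 j, bdigit ((K:ℝ)/2^n) i = ((ones n K j : ℕ) : ℤ) := by
    unfold ones
    rw [Nat.cast_sum]
    exact Finset.sum_congr rfl fun i hi => by
      simp only [Finset.mem_Icc] at hi
      exact bdigit_nat K n i hi.1 (hi.2.trans hj)
  rw [h]


open Classical in
/-- Valid prefixes of length `n` with all partial deficits nonneg and final deficit `h`. -/
noncomputable def V (n h : ℕ) : Finset ℕ :=
  (Finset.range (2^n)).filter
    (fun k => (∀ j ∈ Finset.Icc 1 n, 2 * ones n k j ≤ j) ∧ n = 2 * ones n k n + h)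

noncomputable def cbound (n h : ℕ) : ℤ :=
  (Nat.choose n ((n+h)/2) : ℤ) - (Nat.choose n ((n+h)/2 + 1) : ℤ)



lemma ones_shift (n k j : ℕ) (hj : j ≤ n) : ones (n+1) k j = ones n (k/2) j := by
  unfold ones
  apply Finset.sum_congr rfl
  intro i hi
  simp only [Finset.mem_Icc] at hi
  have h1 : n + 1 - i = (n - i) + 1 := by omega
  rw [h1, Nat.div_div_eq_div_mul, pow_succ]
  ring_nf

lemma ones_top (n k : ℕ) : ones (n+1) k (n+1) = ones n (k/2) n + k % 2 := by
  unfold ones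
  rw [Finset.sum_Icc_succ_top (by omega)]
  congr 1
  · exact ones_shift n k n le_rfl
  · simp

lemma ones_zero (n k : ℕ) : ones n k 0 = 0 := by simp [ones]

lemma c_rec (n h : ℕ) (hh : 1 ≤ h) (hp : (n + 1 + h) % 2 = 0) :
    cbound n (h-1) + cbound n (h+1) = cbound (n+1) h := by
  obtain ⟨t, ht⟩ : ∃ t, n + 1 + h = 2 * t := ⟨(n+1+h)/2, by omega⟩
  have ht1 : 1 ≤ t := by omega
  have e1 : (n + (h-1))/2 = t - 1 := by omega
  have e2 : (n + (h+1))/2 = t := by omega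
  have e3 : (n + 1 + h)/2 = t := by omega
  unfold cbound
  rw [e1, e2, e3]
  have et : t - 1 + 1 = t := by omega
  have p1 : Nat.choose (n+1) t = Nat.choose n (t-1) + Nat.choose n t := by
    rw [← et, Nat.choose_succ_succ, Nat.succ_eq_add_one, et]
  have p2 : Nat.choose (n+1) (t+1) = Nat.choose n t + Nat.choose n (t+1) :=
    Nat.choose_succ_succ n t
  rw [et, p1, p2]
  push_cast
  ring

lemma c_zero (n : ℕ) (hp : (n + 1) % 2 = 0) : cbound n 1 = cbound (n+1) 0 := by
  obtain ⟨t, ht⟩ : ∃ t, n + 1 = 2 * t := ⟨(n+1)/2, by omega⟩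
  have ht1 : 1 ≤ t := by omega
  have e1 : (n + 1)/2 = t := by omega
  unfold cbound
  simp only [Nat.add_zero]
  rw [e1]
  have et : t - 1 + 1 = t := by omega
  have p1 : Nat.choose (n+1) t = Nat.choose n (t-1) + Nat.choose n t := by
    rw [← et, Nat.choose_succ_succ, Nat.succ_eq_add_one, et]
  have p2 : Nat.choose (n+1) (t+1) = Nat.choose n t + Nat.choose n (t+1) :=
    Nat.choose_succ_succ n t
  have psym : Nat.choose n (t-1) = Nat.choose n t := by
    have h1 : n - t = t - 1 := by omega
    rw [← h1, Nat.choose_symm (by omega)]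
  rw [p1, p2, psym]
  push_cast
  ring

lemma mem_V (n h k : ℕ) : k ∈ V n h ↔
    k < 2^n ∧ (∀ j, 1 ≤ j → j ≤ n → 2 * ones n k j ≤ j) ∧ n = 2 * ones n k n + h := by
  unfold V
  simp only [Finset.mem_filter, Finset.mem_range, Finset.mem_Icc, and_imp]

lemma V_card_le : ∀ n h, (n + h) % 2 = 0 → ((V n h).card : ℤ) ≤ cbound n h := by
  intro n
  induction n with
  | zero =>
    intro h hp
    by_cases h0 : h = 0
    · subst h0
      have hsub : V 0 0 ⊆ {0} := by
        intro k hk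
        rw [mem_V] at hk
        simp only [pow_zero] at hk
        simp only [Finset.mem_singleton]
        omega
      have := Finset.card_le_card hsub
      simp only [Finset.card_singleton] at this
      have hc : cbound 0 0 = 1 := by unfold cbound; simp
      rw [hc]; exact_mod_cast this
    · have hV : V 0 h = ∅ := by
        apply Finset.eq_empty_of_forall_notMem
        intro k hk
        rw [mem_V] at hk
        have := hk.2.2
        rw [ones_zero] at this
        omega
      rw [hV]
      have h2 : 1 ≤ (0 + h)/2 := by omega
      have hc : cbound 0 h = 0 := by
        unfold cbound
        rw [Nat.choose_eq_zero_of_lt (by omega), Nat.choose_eq_zero_of_lt (by omega)]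
        simp
      rw [hc]; simp
  | succ n ih =>
    intro h hp
    set A0 := (V (n+1) h).filter (fun k => k % 2 = 0) with hA0
    set A1 := (V (n+1) h).filter (fun k => ¬ (k % 2 = 0)) with hA1
    have hcard : (V (n+1) h).card = A0.card + A1.card :=
      (Finset.card_filter_add_card_filter_not _).symm
    have hmem : ∀ k ∈ V (n+1) h, k / 2 < 2^n ∧
        (∀ j, 1 ≤ j → j ≤ n → 2 * ones n (k/2) j ≤ j) ∧
        n + 1 = 2 * (ones n (k/2) n + k % 2) + h := by
      intro k hk
      rw [mem_V] at hk
      obtain ⟨hlt, hpre, htop⟩ := hk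
      refine ⟨by rw [pow_succ] at hlt; omega, fun j h1 h2 => ?_, ?_⟩
      · rw [← ones_shift n k j h2]; exact hpre j h1 (by omega)
      · rw [htop, ones_top]
    have hA1le : (A1.card : ℤ) ≤ cbound n (h+1) := by
      have hsub : ∀ k ∈ A1, k / 2 ∈ V n (h+1) := by
        intro k hk
        simp only [hA1, Finset.mem_filter] at hk
        obtain ⟨hkV, hodd⟩ := hk
        obtain ⟨hlt, hpre, htop⟩ := hmem k hkV
        rw [mem_V]
        exact ⟨hlt, hpre, by omega⟩
      have hinj : Set.InjOn (fun k => k / 2) A1 := by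
        intro a ha b hb hab
        simp only [hA1, Finset.coe_filter, Set.mem_setOf_eq] at ha hb
        have ha2 := ha.2
        have hb2 := hb.2
        simp only at ha2 hb2 hab
        omega
      calc (A1.card : ℤ) ≤ ((V n (h+1)).card : ℤ) := by
            exact_mod_cast Finset.card_le_card_of_injOn _ hsub hinj
        _ ≤ cbound n (h+1) := ih (h+1) (by omega)
    by_cases h0 : h = 0
    · subst h0
      have hA0empty : A0 = ∅ := by
        apply Finset.eq_empty_of_forall_notMem
        intro k hk
        simp only [hA0, Finset.mem_filter] at hk
        obtain ⟨hkV, heven⟩ := hk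
        obtain ⟨hlt, hpre, htop⟩ := hmem k hkV
        have hn1 : 1 ≤ n := by omega
        have := hpre n hn1 le_rfl
        omega
      have : ((V (n+1) 0).card : ℤ) ≤ cbound n 1 := by
        rw [hcard, hA0empty]
        simpa using hA1le
      calc ((V (n+1) 0).card : ℤ) ≤ cbound n 1 := this
        _ = cbound (n+1) 0 := c_zero n (by omega)
    · have hh1 : 1 ≤ h := by omega
      have hA0le : (A0.card : ℤ) ≤ cbound n (h-1) := by
        have hsub : ∀ k ∈ A0, k / 2 ∈ V n (h-1) := by
          intro k hk
          simp only [hA0, Finset.mem_filter] at hk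
          obtain ⟨hkV, heven⟩ := hk
          obtain ⟨hlt, hpre, htop⟩ := hmem k hkV
          rw [mem_V]
          exact ⟨hlt, hpre, by omega⟩
        have hinj : Set.InjOn (fun k => k / 2) A0 := by
          intro a ha b hb hab
          simp only [hA0, Finset.coe_filter, Set.mem_setOf_eq] at ha hb
          have ha2 := ha.2
          have hb2 := hb.2
          simp only at ha2 hb2 hab
          omega
        calc (A0.card : ℤ) ≤ ((V n (h-1)).card : ℤ) := by
              exact_mod_cast Finset.card_le_card_of_injOn _ hsub hinj
          _ ≤ cbound n (h-1) := ih (h-1) (by omega)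
      calc ((V (n+1) h).card : ℤ) = (A0.card : ℤ) + A1.card := by exact_mod_cast hcard
        _ ≤ cbound n (h-1) + cbound n (h+1) := add_le_add hA0le hA1le
        _ = cbound (n+1) h := c_rec n h hh1 hp


lemma cb_sq_bound : ∀ m : ℕ, (3*m+1) * (Nat.centralBinom m)^2 ≤ 16^m := by
  intro m
  induction m with
  | zero => simp [Nat.centralBinom]
  | succ m ih =>
    have hid := Nat.succ_mul_centralBinom_succ m
    have hkey : (3*m+4) * 4 * (2*m+1)^2 ≤ 16 * (m+1)^2 * (3*m+1) := by nlinarith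
    have hmul : (m+1)^2 * ((3*(m+1)+1) * (Nat.centralBinom (m+1))^2)
        ≤ (m+1)^2 * 16^(m+1) := by
      have e1 : (m+1)^2 * ((3*(m+1)+1) * (Nat.centralBinom (m+1))^2)
          = (3*m+4) * ((m+1) * Nat.centralBinom (m+1))^2 := by ring
      rw [e1, hid]
      calc (3*m+4) * (2 * (2*m+1) * Nat.centralBinom m)^2
          = ((3*m+4) * 4 * (2*m+1)^2) * (Nat.centralBinom m)^2 := by ring
        _ ≤ (16 * (m+1)^2 * (3*m+1)) * (Nat.centralBinom m)^2 :=
            Nat.mul_le_mul_right _ hkey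
        _ = (m+1)^2 * (16 * ((3*m+1) * (Nat.centralBinom m)^2)) := by ring
        _ ≤ (m+1)^2 * (16 * 16^m) := by
            apply Nat.mul_le_mul_left
            exact Nat.mul_le_mul_left _ ih
        _ = (m+1)^2 * 16^(m+1) := by ring
    exact Nat.le_of_mul_le_mul_left hmul (by positivity)

lemma cbound_central (m : ℕ) : ((m:ℤ)+1) * cbound (2*m) 0 = (Nat.centralBinom m : ℤ) := by
  unfold cbound
  have e : (2*m+0)/2 = m := by omega
  rw [e]
  have hid : Nat.choose (2*m) (m+1) * (m+1) = Nat.choose (2*m) m * m := by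
    have := Nat.choose_succ_right_eq (2*m) m
    simpa [two_mul] using this
  have hid' : ((Nat.choose (2*m) (m+1) : ℤ)) * ((m:ℤ)+1) = (Nat.choose (2*m) m : ℤ) * m := by
    exact_mod_cast hid
  have hcb : (Nat.centralBinom m : ℤ) = (Nat.choose (2*m) m : ℤ) := by
    rw [Nat.centralBinom_eq_two_mul_choose]
  rw [hcb]
  linear_combination -hid'

lemma card_div_bound (m : ℕ) (card : ℕ) (hcard : (card : ℤ) ≤ cbound (2*m) 0) :
    (card : ℝ) / 2^(2*m) ≤ 1 / (((m:ℝ)+1) * Real.sqrt ((m:ℝ)+1)) := by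
  set C : ℕ := Nat.centralBinom m with hC
  have h1 : (card : ℤ) * ((m:ℤ)+1) ≤ (C : ℤ) := by
    calc (card : ℤ) * ((m:ℤ)+1) ≤ cbound (2*m) 0 * ((m:ℤ)+1) := by
          apply mul_le_mul_of_nonneg_right hcard; positivity
      _ = (C : ℤ) := by rw [mul_comm]; exact cbound_central m
  have h1R : (card : ℝ) * ((m:ℝ)+1) ≤ (C : ℝ) := by exact_mod_cast h1
  have h2 : ((C:ℝ))^2 * (3*(m:ℝ)+1) ≤ ((4:ℝ)^m)^2 := by
    have := cb_sq_bound m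
    have hcast : ((3*m+1 : ℕ) : ℝ) * ((C:ℕ):ℝ)^2 ≤ ((16:ℕ):ℝ)^m := by exact_mod_cast this
    push_cast at hcast
    calc ((C:ℝ))^2 * (3*(m:ℝ)+1) = (3*(m:ℝ)+1) * ((C:ℝ))^2 := by ring
      _ ≤ (16:ℝ)^m := hcast
      _ = ((4:ℝ)^m)^2 := by
          rw [← pow_mul, show (16:ℝ) = 4^2 by norm_num, ← pow_mul, mul_comm]
  have hsq : Real.sqrt (3*(m:ℝ)+1) ≥ Real.sqrt ((m:ℝ)+1) := by
    apply Real.sqrt_le_sqrt; linarith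
  have h3 : (C:ℝ) * Real.sqrt (3*(m:ℝ)+1) ≤ (4:ℝ)^m := by
    have hnn : (0:ℝ) ≤ (C:ℝ) * Real.sqrt (3*(m:ℝ)+1) := by positivity
    have hsqeq : ((C:ℝ) * Real.sqrt (3*(m:ℝ)+1))^2 = ((C:ℝ))^2 * (3*(m:ℝ)+1) := by
      rw [mul_pow, Real.sq_sqrt (by positivity)]
    calc (C:ℝ) * Real.sqrt (3*(m:ℝ)+1)
        = Real.sqrt (((C:ℝ) * Real.sqrt (3*(m:ℝ)+1))^2) := (Real.sqrt_sq hnn).symm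
      _ ≤ Real.sqrt (((4:ℝ)^m)^2) := by
          apply Real.sqrt_le_sqrt; rw [hsqeq]; exact h2
      _ = (4:ℝ)^m := Real.sqrt_sq (by positivity)
  have h4m : ((2:ℝ))^(2*m) = (4:ℝ)^m := by rw [pow_mul]; norm_num
  rw [h4m, div_le_div_iff₀ (by positivity) (by positivity), one_mul]
  calc (card : ℝ) * (((m:ℝ)+1) * Real.sqrt ((m:ℝ)+1))
      = ((card : ℝ) * ((m:ℝ)+1)) * Real.sqrt ((m:ℝ)+1) := by ring
    _ ≤ (C:ℝ) * Real.sqrt ((m:ℝ)+1) := by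
        apply mul_le_mul_of_nonneg_right h1R; positivity
    _ ≤ (C:ℝ) * Real.sqrt (3*(m:ℝ)+1) := by
        apply mul_le_mul_of_nonneg_left hsq; positivity
    _ ≤ (4:ℝ)^m := h3


lemma takagi_bounds (x : ℝ) (N : ℕ) (hD : defDigit x N = 0) :
    takagi ((⌊(2:ℝ)^N * x⌋ : ℝ)/2^N) ≤ takagi x ∧
      takagi x ≤ takagi ((⌊(2:ℝ)^N * x⌋ : ℝ)/2^N) + 1/2^N := by
  have h := takagi_decomp x N
  rw [hD] at h
  simp only [Int.cast_zero, mul_zero, add_zero] at h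
  have hp : (0:ℝ) < 2^N := by positivity
  have h0 := takagi_nonneg (Int.fract ((2:ℝ)^N * x))
  have h1 := takagi_le_one (Int.fract ((2:ℝ)^N * x))
  constructor
  · rw [h]; nlinarith [div_nonneg h0 hp.le]
  · rw [h]
    have : takagi (Int.fract ((2:ℝ)^N * x)) / 2^N ≤ 1/2^N :=
      (div_le_div_iff_of_pos_right hp).mpr h1
    linarith [this]

lemma key_mem_V (x : ℝ) (hx0 : 0 ≤ x) (hx1 : x < 1) (m : ℕ)
    (hpre : ∀ j : ℕ, 1 ≤ j → 0 ≤ defDigit x j) (hbal : defDigit x (2*m) = 0) :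
    (⌊(2:ℝ)^(2*m) * x⌋).toNat ∈ V (2*m) 0 := by
  set N := 2*m with hN
  have hfl0 : (0:ℤ) ≤ ⌊(2:ℝ)^N * x⌋ := Int.floor_nonneg.mpr (mul_nonneg (by positivity) hx0)
  set K : ℕ := (⌊(2:ℝ)^N * x⌋).toNat with hK
  have hKc : ((K:ℕ):ℝ) = ((⌊(2:ℝ)^N * x⌋ : ℤ) : ℝ) := by
    rw [hK]; exact_mod_cast congrArg (Int.cast : ℤ → ℝ) (Int.toNat_of_nonneg hfl0)
  have hKlt : K < 2^N := by
    have hr : (2:ℝ)^N * x < 2^N := by nlinarith [pow_pos (show (0:ℝ) < 2 by norm_num) N]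
    have h2 : ⌊(2:ℝ)^N * x⌋ < ((2^N : ℕ) : ℤ) := Int.floor_lt.mpr (by push_cast; exact hr)
    omega
  have hdd : ∀ j : ℕ, j ≤ N → defDigit ((K:ℝ)/2^N) j = defDigit x j := by
    intro j hj
    rw [hKc]
    exact defDigit_trunc x N j hj
  rw [mem_V]
  refine ⟨hKlt, fun j h1 h2 => ?_, ?_⟩
  · have e := defDigit_nat K N j h2
    rw [hdd j h2] at e
    have := hpre j h1
    omega
  · have e := defDigit_nat K N N le_rfl
    rw [hdd N le_rfl] at e
    omega


/-- The image `τ(Ω^L_∞)` has Lebesgue measure zero. -/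
theorem volume_takagi_image_OmegaLinf :
    MeasureTheory.volume (takagi '' OmegaLinf) = 0 := by
  set f : ℕ → ENNReal := fun m => ENNReal.ofReal (1 / (((m:ℝ)+1) * Real.sqrt ((m:ℝ)+1))) with hf
  -- the covering bound
  have key : ∀ M : ℕ, volume (takagi '' OmegaLinf) ≤ ∑' i : ℕ, f (i + M) := by
    intro M
    set U : Set ℝ := ⋃ i : ℕ, ⋃ k ∈ V (2*(i+M)) 0,
      Icc (takagi ((k:ℝ)/2^(2*(i+M)))) (takagi ((k:ℝ)/2^(2*(i+M))) + 1/2^(2*(i+M))) with hU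
    have hsub : takagi '' OmegaLinf ⊆ U := by
      rintro y ⟨x, hx, rfl⟩
      obtain ⟨⟨hIco, hpre⟩, hinf⟩ := hx
      obtain ⟨j, hjmem, hjgt⟩ := hinf.exists_gt (2*M)
      obtain ⟨hj1, hjbal⟩ := hjmem
      have hjeven : j % 2 = 0 := by
        unfold defDigit at hjbal
        omega
      set m : ℕ := j / 2 with hm
      have hjm : j = 2*m := by omega
      have hmM : M ≤ m := by omega
      rw [hjm] at hjbal
      have hKmem := key_mem_V x hIco.1 hIco.2 m hpre hjbal
      have hbounds := takagi_bounds x (2*m) hjbal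
      rw [hU]
      apply mem_iUnion.mpr
      refine ⟨m - M, ?_⟩
      apply mem_iUnion₂.mpr
      have hmm : m - M + M = m := by omega
      refine ⟨(⌊(2:ℝ)^(2*m) * x⌋).toNat, by rw [hmm]; exact hKmem, ?_⟩
      rw [hmm]
      have hfl0 : (0:ℤ) ≤ ⌊(2:ℝ)^(2*m) * x⌋ :=
        Int.floor_nonneg.mpr (mul_nonneg (by positivity) hIco.1)
      have hKc : (((⌊(2:ℝ)^(2*m) * x⌋).toNat : ℕ):ℝ) = ((⌊(2:ℝ)^(2*m) * x⌋ : ℤ) : ℝ) := by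
        exact_mod_cast congrArg (Int.cast : ℤ → ℝ) (Int.toNat_of_nonneg hfl0)
      rw [hKc]
      exact ⟨hbounds.1, hbounds.2⟩
    have hvol : volume U ≤ ∑' i : ℕ, f (i + M) := by
      rw [hU]
      refine le_trans (measure_iUnion_le _) (ENNReal.tsum_le_tsum fun i => ?_)
      refine le_trans (measure_biUnion_finset_le _ _) ?_
      have hvol1 : ∀ k : ℕ, volume (Icc (takagi ((k:ℝ)/2^(2*(i+M))))
          (takagi ((k:ℝ)/2^(2*(i+M))) + 1/2^(2*(i+M)))) = ENNReal.ofReal (1/2^(2*(i+M))) := by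
        intro k
        rw [Real.volume_Icc]
        ring_nf
      calc ∑ k ∈ V (2*(i+M)) 0, volume (Icc (takagi ((k:ℝ)/2^(2*(i+M))))
              (takagi ((k:ℝ)/2^(2*(i+M))) + 1/2^(2*(i+M))))
          = ((V (2*(i+M)) 0).card : ENNReal) * ENNReal.ofReal (1/2^(2*(i+M))) := by
            rw [Finset.sum_congr rfl fun k _ => hvol1 k, Finset.sum_const, nsmul_eq_mul]
        _ = ENNReal.ofReal (((V (2*(i+M)) 0).card : ℝ) * (1/2^(2*(i+M)))) := by
            rw [ENNReal.ofReal_mul (by positivity), ENNReal.ofReal_natCast]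
        _ ≤ f (i + M) := by
            rw [hf]
            apply ENNReal.ofReal_le_ofReal
            have hc : (((V (2*(i+M)) 0).card : ℕ) : ℤ) ≤ cbound (2*(i+M)) 0 :=
              V_card_le (2*(i+M)) 0 (by omega)
            have := card_div_bound (i+M) _ hc
            rw [div_eq_mul_one_div] at this
            push_cast at this ⊢
            linarith [this]
    exact le_trans (measure_mono hsub) hvol
  -- summability and limit
  have hg : Summable (fun m : ℕ => 1 / (((m:ℝ)+1) * Real.sqrt ((m:ℝ)+1))) := by
    have h32 : Summable (fun n : ℕ => 1 / (n:ℝ) ^ ((3:ℝ)/2)) :=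
      Real.summable_one_div_nat_rpow.mpr (by norm_num)
    have hshift : Summable (fun n : ℕ => 1 / ((n+1:ℕ):ℝ) ^ ((3:ℝ)/2)) :=
      (summable_nat_add_iff 1).mpr h32
    apply hshift.congr
    intro m
    have hm0 : (0:ℝ) < (m:ℝ)+1 := by positivity
    rw [show (((m+1:ℕ)):ℝ) = (m:ℝ)+1 by push_cast; ring]
    rw [show ((3:ℝ)/2) = 1 + 1/2 by norm_num, Real.rpow_add hm0, Real.rpow_one,
      ← Real.sqrt_eq_rpow]
  have hfne : ∑' m, f m ≠ ⊤ := by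
    rw [hf, ← ENNReal.ofReal_tsum_of_nonneg (fun m => by positivity) hg]
    exact ENNReal.ofReal_ne_top
  have htends := ENNReal.tendsto_sum_nat_add f hfne
  have hle0 : volume (takagi '' OmegaLinf) ≤ 0 :=
    le_of_tendsto_of_tendsto' tendsto_const_nhds htends key
  exact le_antisymm hle0 zero_le
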